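/- Let (L, G) be a built lattice and let g ∈ G be a join-irreducible element. Then G \ {g} is a building set of the lattice L \ (g). -/

import Mathlib

open scoped Classical

variable {L : Type*} [Lattice L] [BoundedOrder L] [Finite L]

/-- The join of a (finite) subset of `L`. -/
noncomputable def setJoin (S : Set L) : L := S.toFinite.toFinset.sup id

/-- The join of a subset of `L`, relative to a base point `a`. -/
noncomputable def joinFrom (a : L) (S : Set L) : L := a ⊔ setJoin S

/-- The `G`-factors of `F`: the maximal elements of `{g ∈ G | g ≤ F}`. -/
def factors (G : Set L) (F : L) : Set L :=
  {g ∈ G | g ≤ F ∧ ∀ h ∈ G, h ≤ F → g ≤ h → g = h}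

/-- `G` is a building set of the interval `[a, b]` of `L`: the join map
from the product of the intervals `[a, g]` over the `G`-factors `g` of `F`
to `[a, F]` is an order isomorphism, for every `F ∈ [a, b]`. -/
def IsBuildingIcc (a b : L) (G : Set L) : Prop :=
  G ⊆ Set.Icc a b ∧ a ∉ G ∧ ∀ F ∈ Set.Icc a b,
    ∃ e : (∀ g : factors G F, Set.Icc a (g : L)) ≃o Set.Icc a F,
      ∀ x, ((e x : L)) = joinFrom a (Set.range fun g => ((x g : L)))

/-- `G` is a building set of the lattice `L`. -/
def IsBuilding (G : Set L) : Prop := IsBuildingIcc ⊥ ⊤ G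

/-- `S` is a nested set of the built lattice `(L, G)`. -/
def IsNested (G S : Set L) : Prop :=
  S ⊆ G ∧ ∀ A ⊆ S, IsAntichain (· ≤ ·) A → 2 ≤ A.ncard → setJoin A ∉ G

/-- The building ideal generated by `g`. -/
def buildingIdeal (G : Set L) (g : L) : Set L := {F | g ∈ factors G F}

/-- `G` is a building set of the sub-join-semilattice `T ⊆ L` (containing `⊥`, with
joins computed in `L`): for every `F ∈ T`, the join map from the product of the
intervals `[⊥, g] ∩ T` over the `G`-factors `g` of `F` to `[⊥, F] ∩ T` is an
order isomorphism. -/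
def IsBuildingIn (T : Set L) (G : Set L) : Prop :=
  (⊥ : L) ∈ T ∧ G ⊆ T ∧ (⊥ : L) ∉ G ∧ ∀ F ∈ T,
    ∃ e : (∀ g : factors G F, ↥(Set.Icc (⊥ : L) (g : L) ∩ T)) ≃o ↥(Set.Icc (⊥ : L) F ∩ T),
      ∀ x, ((e x : L)) = setJoin (Set.range fun g => ((x g : L)))

lemma le_setJoin' {S : Set L} {a : L} (ha : a ∈ S) : a ≤ setJoin S :=
  Finset.le_sup (f := id) (S.toFinite.mem_toFinset.2 ha)

lemma setJoin_le' {S : Set L} {c : L} (h : ∀ a ∈ S, a ≤ c) : setJoin S ≤ c :=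
  Finset.sup_le fun a haa => h a (S.toFinite.mem_toFinset.1 haa)

omit [BoundedOrder L] in
lemma exists_factor_le {G : Set L} {k F : L} (hk : k ∈ G) (hkF : k ≤ F) :
    ∃ h ∈ factors G F, k ≤ h := by
  obtain ⟨m, hm, hmax⟩ := Set.Finite.exists_maximalFor id {m ∈ G | k ≤ m ∧ m ≤ F}
    (Set.toFinite _) ⟨k, hk, le_rfl, hkF⟩
  exact ⟨m, ⟨hm.1, hm.2.2, fun h' hh' hF hle => le_antisymm hle (hmax ⟨hh', hm.2.1.trans hle, hF⟩ hle)⟩, hm.2.1⟩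

/-- Deleting a join-irreducible `g` from a building set `G` yields a building set
`G \ {g}` of the lattice `L \ (g)`. -/
theorem deletion_isBuilding (G : Set L) (hG : IsBuilding G) (g : L) (hg : g ∈ G)
    (hirr : SupIrred g) :
    IsBuildingIn {x : L | x ∉ buildingIdeal G g} (G \ {g}) := by
  classical
  obtain ⟨-, hbot, hmain⟩ := hG
  have hgbot : g ≠ ⊥ := hirr.ne_bot
  have hbotT : (⊥ : L) ∈ {x : L | x ∉ buildingIdeal G g} := by
    intro h
    exact hgbot (le_antisymm h.2.1 bot_le)
  have hGT : G \ {g} ⊆ {x : L | x ∉ buildingIdeal G g} := by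
    rintro h ⟨hhG, hne⟩ hgf
    exact hne (hgf.2.2 h hhG le_rfl hgf.2.1).symm
  have hfac : ∀ F : L, g ∉ factors G F → factors (G \ {g}) F = factors G F := by
    intro F hFg
    ext k
    constructor
    · rintro ⟨⟨hkG, hkg⟩, hkF, hmax⟩
      refine ⟨hkG, hkF, fun m hm hmF hkm => ?_⟩
      by_cases hmg : m = g
      · rw [hmg] at hm hmF hkm ⊢
        have hex : ∃ m' ∈ G, m' ≤ F ∧ g ≤ m' ∧ g ≠ m' := by
          by_contra hcon
          push_neg at hcon
          exact hFg ⟨hg, hmF, hcon⟩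
        obtain ⟨m', hm', hm'F, hgm', hnem'⟩ := hex
        have hkm' : k = m' := hmax m' ⟨hm', fun he => hnem' (Set.mem_singleton_iff.1 he).symm⟩ hm'F (hkm.trans hgm')
        exact absurd (le_antisymm hkm (hgm'.trans hkm'.ge)) hkg
      · exact hmax m ⟨hm, hmg⟩ hmF hkm
    · rintro ⟨hkG, hkF, hmax⟩
      have hkg : k ≠ g := fun h => hFg (h ▸ ⟨hkG, hkF, hmax⟩)
      exact ⟨⟨hkG, hkg⟩, hkF, fun m hm => hmax m hm.1⟩
  refine ⟨hbotT, hGT, fun h => hbot h.1, fun F hF => ?_⟩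
  rw [hfac F hF]
  obtain ⟨e, he⟩ := hmain F ⟨bot_le, le_top⟩
  -- each coordinate is below the join
  have hcoordle : ∀ (x : ∀ h : factors G F, Set.Icc (⊥:L) (h : L)) (h : factors G F),
      (x h : L) ≤ (e x : L) := by
    intro x h
    rw [he x]
    exact le_sup_of_le_right (le_setJoin' ⟨h, rfl⟩)
  -- delta vectors
  have hδ : ∀ (k : L), k ∈ G → ∀ h : factors G F, k ≤ (h : L) →
      ∃ w : ∀ j : factors G F, Set.Icc (⊥:L) (j : L),
        (e w : L) = k ∧ (w h : L) = k ∧ ∀ j, j ≠ h → (w j : L) = ⊥ := by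
    intro k hk h hkh
    refine ⟨fun j => if hj : j = h then ⟨k, bot_le, by rw [hj]; exact hkh⟩
      else ⟨⊥, bot_le, bot_le⟩, ?_, ?_, ?_⟩
    · rw [he]
      show ⊥ ⊔ setJoin _ = k
      rw [bot_sup_eq]
      apply le_antisymm
      · apply setJoin_le'
        rintro a ⟨j, rfl⟩
        by_cases hj : j = h <;> simp [hj]
      · exact le_setJoin' ⟨h, by simp⟩
    · simp
    · intro j hj; simp [hj]
  -- coordinate extraction for elements of G
  have hcoord : ∀ (k : L), k ∈ G → ∀ h : factors G F, k ≤ (h : L) →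
      ∀ x, k ≤ (e x : L) → k ≤ (x h : L) := by
    intro k hk h hkh x hkx
    obtain ⟨w, hw1, hw2, -⟩ := hδ k hk h hkh
    have hwx : w ≤ x := by
      rw [← e.le_iff_le]
      show (e w : L) ≤ (e x : L)
      rw [hw1]; exact hkx
    have := hwx h
    rw [← hw2]
    exact this
  -- uniqueness of the factor above g
  have huniq : ∀ h h' : factors G F, g ≤ (h : L) → g ≤ (h' : L) → h = h' := by
    intro h h' h1 h2
    by_contra hne
    obtain ⟨w, hw1, hw2, hw3⟩ := hδ g hg h h1
    obtain ⟨w', hw1', hw2', hw3'⟩ := hδ g hg h' h2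
    have hww : w = w' := e.injective (Subtype.ext (hw1.trans hw1'.symm))
    exact hgbot (by rw [← hw2, hww, hw3' h hne])
  -- the key lemma: the join lies in T iff all coordinates do
  have hK : ∀ x : ∀ h : factors G F, Set.Icc (⊥:L) (h : L),
      (g ∉ factors G (e x : L) ↔ ∀ h, g ∉ factors G (x h : L)) := by
    intro x
    constructor
    · intro hT h hgf
      apply hT
      refine ⟨hg, hgf.2.1.trans (hcoordle x h), fun m hm hmx hgm => ?_⟩
      obtain ⟨h', hh', hmh'⟩ := exists_factor_le hm (hmx.trans (e x).2.2)
      have hmx' : m ≤ (x ⟨h', hh'⟩ : L) := hcoord m hm ⟨h', hh'⟩ hmh' x hmx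
      have heq : h = (⟨h', hh'⟩ : factors G F) :=
        huniq h ⟨h', hh'⟩ (hgf.2.1.trans (x h).2.2) (hgm.trans hmh')
      rw [← heq] at hmx'
      exact hgf.2.2 m hm hmx' hgm
    · intro hT hgf
      have hgF : g ≤ F := hgf.2.1.trans (e x).2.2
      set w := e.symm ⟨g, bot_le, hgF⟩ with hw
      have hewg : (e w : L) = g := by rw [hw, e.apply_symm_apply]
      have hgjoin : setJoin (Set.range fun j => (w j : L)) = g := by
        have h1 := he w
        rw [hewg] at h1
        rcases hirr.2 (h1.symm : (⊥ : L) ⊔ _ = g) with h2 | h2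
        · exact absurd h2.symm hgbot
        · exact h2
      obtain ⟨a, ha, hag⟩ := hirr.finset_sup_eq (f := id) hgjoin
      obtain ⟨j, hj⟩ := (Set.Finite.mem_toFinset _).1 ha
      have hjg : (w j : L) = g := hj.trans hag
      have hwx : w ≤ x := by
        rw [← e.le_iff_le]
        show (e w : L) ≤ (e x : L)
        rw [hewg]; exact hgf.2.1
      have hgxj : g ≤ (x j : L) := by
        rw [← hjg]; exact hwx j
      exact hT j ⟨hg, hgxj, fun m hm hmx hgm =>
        hgf.2.2 m hm (hmx.trans (hcoordle x j)) hgm⟩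
  -- membership of inverse coordinates in T
  have hsymmT : ∀ y : ↥(Set.Icc (⊥:L) F ∩ {x : L | x ∉ buildingIdeal G g}),
      ∀ h : factors G F, (e.symm ⟨(y : L), y.2.1⟩ h : L) ∈ {x : L | x ∉ buildingIdeal G g} := by
    intro y h
    refine (hK (e.symm ⟨(y : L), y.2.1⟩)).1 ?_ h
    rw [e.apply_symm_apply]
    exact y.2.2
  refine ⟨⟨⟨fun x => ⟨(e fun h => ⟨(x h : L), (x h).2.1⟩ : L),
      (e fun h => ⟨(x h : L), (x h).2.1⟩).2,
      (hK fun h => ⟨(x h : L), (x h).2.1⟩).2 fun h => (x h).2.2⟩,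
    fun y h => ⟨(e.symm ⟨(y : L), y.2.1⟩ h : L),
      (e.symm ⟨(y : L), y.2.1⟩ h).2, hsymmT y h⟩, ?_, ?_⟩, ?_⟩, ?_⟩
  · intro x
    funext h
    apply Subtype.ext
    show (e.symm (e fun h => ⟨(x h : L), (x h).2.1⟩) h : L) = (x h : L)
    rw [e.symm_apply_apply]
  · intro y
    apply Subtype.ext
    show ((e (e.symm ⟨(y : L), y.2.1⟩) : L)) = (y : L)
    rw [e.apply_symm_apply]
  · intro x y
    show e _ ≤ e _ ↔ _
    rw [e.le_iff_le]
    exact Iff.rfl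
  · intro x
    show (e fun h => ⟨(x h : L), (x h).2.1⟩ : L) = _
    rw [he]
    show ⊥ ⊔ setJoin _ = _
    rw [bot_sup_eq]
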